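/- Let R be a ring and A, B two right ideals of R that are similar, i.e., R/A ≅ R/B as right R-modules. If A has a serial factorization, then B has a serial factorization, and moreover either A = B or the right R-module R/A (equivalently R/B) is uniserial. -/

import Mathlib

open MulOpposite

universe u

/-- The product `A·B` of two right ideals of `R` (right ideals are `Rᵐᵒᵖ`-submodules of `R`):
the set of all finite sums of products `a * b` with `a ∈ A`, `b ∈ B`. -/
def rmul {R : Type u} [Ring R] (A B : Submodule Rᵐᵒᵖ R) : Submodule Rᵐᵒᵖ R :=
  Submodule.span Rᵐᵒᵖ {x : R | ∃ a ∈ A, ∃ b ∈ B, x = a * b}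

/-- The product `A₁⋯Aₙ` of a (possibly empty) list of right ideals. -/
def rprod {R : Type u} [Ring R] : List (Submodule Rᵐᵒᵖ R) → Submodule Rᵐᵒᵖ R
  | [] => ⊤
  | [A] => A
  | A :: l => rmul A (rprod l)

/-- A finite family of right ideals is coindependent if `Aᵢ + ⋂_{j ≠ i} Aⱼ = R` for every `i`. -/
def Coindep {R : Type u} [Ring R] {n : ℕ} (A : Fin n → Submodule Rᵐᵒᵖ R) : Prop :=
  ∀ i, A i ⊔ (⨅ j, ⨅ (_ : j ≠ i), A j) = ⊤

/-- A module is uniserial if its submodules are linearly ordered by inclusion. -/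
def IsUniserialMod (S : Type*) [Ring S] (M : Type*) [AddCommGroup M] [Module S M] : Prop :=
  ∀ N P : Submodule S M, N ≤ P ∨ P ≤ N

/-- A right ideal is a two-sided ideal if it is also closed under left multiplication. -/
def IsTwoSidedRid {R : Type u} [Ring R] (A : Submodule Rᵐᵒᵖ R) : Prop :=
  ∀ (r : R), ∀ x ∈ A, r * x ∈ A

/-- A serial factorization of a right ideal `A`: a factorization `A = A₁⋯Aₙ` into proper
right ideals that pairwise commute, form a coindependent family, and are such that every
quotient `R/Aᵢ` is a uniserial right `R`-module. -/
def IsSerialFact {R : Type u} [Ring R] {n : ℕ} (A : Submodule Rᵐᵒᵖ R)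
    (F : Fin n → Submodule Rᵐᵒᵖ R) : Prop :=
  (∀ i, F i ≠ ⊤) ∧ (∀ i j, rmul (F i) (F j) = rmul (F j) (F i)) ∧ Coindep F ∧
    (∀ i, IsUniserialMod Rᵐᵒᵖ (R ⧸ F i)) ∧ A = rprod (List.ofFn F)

/-- A right ideal has a serial factorization if it admits one of some length. -/
def HasSerialFact {R : Type u} [Ring R] (A : Submodule Rᵐᵒᵖ R) : Prop :=
  ∃ (n : ℕ) (F : Fin n → Submodule Rᵐᵒᵖ R), IsSerialFact A F

/-- A right chain ring: its right ideals are linearly ordered by inclusion. -/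
def IsRightChainRing (R : Type u) [Ring R] : Prop :=
  ∀ A B : Submodule Rᵐᵒᵖ R, A ≤ B ∨ B ≤ A

/-- A ring is right duo if every right ideal is a two-sided ideal. -/
def IsRightDuo (R : Type u) [Ring R] : Prop :=
  ∀ A : Submodule Rᵐᵒᵖ R, IsTwoSidedRid A

/-- The principal right ideal `rR`. -/
def rspan {R : Type u} [Ring R] (r : R) : Submodule Rᵐᵒᵖ R :=
  Submodule.span Rᵐᵒᵖ ({r} : Set R)

/-!
A similarity `R/A ≅ R/B` is left multiplication by some `t` with `t r ≡ 1 (mod A)`, and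
`B = {s | t s ∈ A}`. With at least two factors, coindependence and commutation make every factor
`Aᵢ` two-sided. Then `r t` is idempotent modulo `Aᵢ`, and as the cyclic submodules generated by
`r t` and `1 - r t` in the uniserial `R/Aᵢ` are comparable, one of them vanishes; `r t ∈ Aᵢ` would
give `1 ∈ Aᵢ`, so `r t ≡ 1 (mod Aᵢ)` as well. Since `1 - r t` is idempotent modulo `A` and lies
in every factor, it lies in the product `A`, which forces `B = A`. With at most one factor,
`A = R` or `R/A` is uniserial, and both properties pass to `B`.
-/

section RightIdeals

variable {R : Type u} [Ring R]

theorem mem_rmul {A B : Submodule Rᵐᵒᵖ R} {a b : R} (ha : a ∈ A) (hb : b ∈ B) :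
    a * b ∈ rmul A B :=
  Submodule.subset_span ⟨a, ha, b, hb, rfl⟩

theorem rmul_le {A B C : Submodule Rᵐᵒᵖ R} (h : ∀ a ∈ A, ∀ b ∈ B, a * b ∈ C) :
    rmul A B ≤ C :=
  Submodule.span_le.2 (by rintro x ⟨a, ha, b, hb, rfl⟩; exact h a ha b hb)

theorem rmul_le_left {A B : Submodule Rᵐᵒᵖ R} : rmul A B ≤ A :=
  rmul_le fun _ ha b _ => A.smul_mem (op b) ha

theorem rmul_le_right {A B : Submodule Rᵐᵒᵖ R} (hB : IsTwoSidedRid B) : rmul A B ≤ B :=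
  rmul_le fun a _ _ hb => hB a _ hb

theorem rmul_top (A : Submodule Rᵐᵒᵖ R) : rmul A ⊤ = A := by
  refine le_antisymm rmul_le_left fun a ha => ?_
  simpa using mem_rmul ha (Submodule.mem_top (x := (1 : R)))

theorem rprod_cons (X : Submodule Rᵐᵒᵖ R) (l : List (Submodule Rᵐᵒᵖ R)) :
    rprod (X :: l) = rmul X (rprod l) := by
  cases l with
  | nil => exact (rmul_top X).symm
  | cons _ _ => rfl

theorem isTwoSidedRid_top : IsTwoSidedRid (⊤ : Submodule Rᵐᵒᵖ R) :=
  fun _ _ _ => Submodule.mem_top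

theorem IsTwoSidedRid.rmul {A : Submodule Rᵐᵒᵖ R} (hA : IsTwoSidedRid A)
    (B : Submodule Rᵐᵒᵖ R) : IsTwoSidedRid (rmul A B) := by
  intro r x hx
  induction hx using Submodule.span_induction with
  | mem _ hy =>
    obtain ⟨a, ha, b, hb, rfl⟩ := hy
    rw [← mul_assoc]
    exact mem_rmul (hA r a ha) hb
  | zero => simp
  | add _ _ _ _ hx hy => rw [mul_add]; exact add_mem hx hy
  | smul c _ _ hx =>
    rw [MulOpposite.smul_eq_mul_unop, ← mul_assoc, ← MulOpposite.smul_eq_mul_unop]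
    exact Submodule.smul_mem _ _ hx

theorem isTwoSidedRid_rprod :
    ∀ l : List (Submodule Rᵐᵒᵖ R), (∀ X ∈ l, IsTwoSidedRid X) → IsTwoSidedRid (rprod l)
  | [], _ => isTwoSidedRid_top
  | X :: l, hl => by
    rw [rprod_cons]
    exact (hl X List.mem_cons_self).rmul _

theorem rprod_le_of_mem {X : Submodule Rᵐᵒᵖ R} :
    ∀ {l : List (Submodule Rᵐᵒᵖ R)}, (∀ Y ∈ l, IsTwoSidedRid Y) → X ∈ l → rprod l ≤ X
  | Y :: l, hl, hX => by
    rw [rprod_cons]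
    rcases List.mem_cons.1 hX with rfl | hX
    · exact rmul_le_left
    · have hl' : ∀ Z ∈ l, IsTwoSidedRid Z := fun Z hZ => hl Z (List.mem_cons_of_mem _ hZ)
      exact (rmul_le_right (isTwoSidedRid_rprod l hl')).trans (rprod_le_of_mem hl' hX)

theorem pow_length_mem_rprod {x : R} :
    ∀ {l : List (Submodule Rᵐᵒᵖ R)}, (∀ X ∈ l, x ∈ X) → x ^ l.length ∈ rprod l
  | [], _ => Submodule.mem_top
  | X :: l, hx => by
    rw [rprod_cons, List.length_cons, pow_succ']
    exact mem_rmul (hx X List.mem_cons_self)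
      (pow_length_mem_rprod fun Y hY => hx Y (List.mem_cons_of_mem _ hY))

theorem pow_succ_sub_self_mem {C : Submodule Rᵐᵒᵖ R} {f : R} (hf : f * f - f ∈ C) :
    ∀ k : ℕ, f ^ (k + 1) - f ∈ C
  | 0 => by simp
  | k + 1 => by
    have h : f ^ (k + 2) - f = (f ^ (k + 1) - f) * f + (f * f - f) := by
      rw [pow_succ _ (k + 1)]; noncomm_ring
    rw [h]
    exact add_mem (C.smul_mem (op f) (pow_succ_sub_self_mem hf k)) hf

-- `f ^ n ∈ rprod l`, and `f ^ n ≡ f` modulo `rprod l` since `f` is idempotent there.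
theorem mem_rprod_of_mul_self_sub_mem {l : List (Submodule Rᵐᵒᵖ R)} (hl : l ≠ []) {f : R}
    (hf : f * f - f ∈ rprod l) (h : ∀ X ∈ l, f ∈ X) : f ∈ rprod l := by
  obtain ⟨k, hk⟩ := Nat.exists_eq_succ_of_ne_zero (List.length_pos_iff.2 hl).ne'
  have hpow := pow_length_mem_rprod h
  rw [hk] at hpow
  simpa using sub_mem hpow (pow_succ_sub_self_mem hf k)

theorem mul_self_sub_mem_of_one_sub_mul_mem {C : Submodule Rᵐᵒᵖ R} (hC : IsTwoSidedRid C)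
    {t r : R} (h : 1 - t * r ∈ C) : r * t * (r * t) - r * t ∈ C := by
  have h' : r * ((1 - t * r) * t) ∈ C := hC r _ (C.smul_mem (op t) h)
  have e : r * t * (r * t) - r * t = -(r * ((1 - t * r) * t)) := by noncomm_ring
  rw [e]
  exact neg_mem h'

theorem isTwoSidedRid_of_sup_eq_top {C D : Submodule Rᵐᵒᵖ R} (h : C ⊔ D = ⊤)
    (hDC : rmul D C ≤ C) : IsTwoSidedRid C := by
  intro r x hx
  obtain ⟨a, ha, b, hb, rfl⟩ := Submodule.mem_sup.1 (h ▸ Submodule.mem_top (x := r))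
  rw [add_mul]
  exact add_mem (C.smul_mem (op x) ha) (hDC (mem_rmul hb hx))

theorem Coindep.sup_eq_top {n : ℕ} {F : Fin n → Submodule Rᵐᵒᵖ R} (hF : Coindep F)
    {i j : Fin n} (hji : j ≠ i) : F i ⊔ F j = ⊤ :=
  top_unique <| hF i ▸ sup_le_sup_left (iInf₂_le j hji) _

end RightIdeals

section Uniserial

theorem IsUniserialMod.of_equiv {S M M' : Type*} [Ring S] [AddCommGroup M] [AddCommGroup M']
    [Module S M] [Module S M'] (φ : M ≃ₗ[S] M') (h : IsUniserialMod S M) :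
    IsUniserialMod S M' := by
  intro N P
  let e := (Submodule.orderIsoMapComap φ).symm
  exact (h (e N) (e P)).imp e.le_iff_le.1 e.le_iff_le.1

theorem IsUniserialMod.sup_le_total {S M : Type*} [Ring S] [AddCommGroup M] [Module S M]
    {C : Submodule S M} (h : IsUniserialMod S (M ⧸ C)) (I J : Submodule S M) :
    C ⊔ I ≤ C ⊔ J ∨ C ⊔ J ≤ C ⊔ I := by
  rw [← Submodule.comap_map_mkQ, ← Submodule.comap_map_mkQ]
  exact (h (I.map C.mkQ) (J.map C.mkQ)).imp (Submodule.comap_mono ·) (Submodule.comap_mono ·)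

variable {R : Type u} [Ring R] {C : Submodule Rᵐᵒᵖ R}

theorem one_sub_mem_of_mem_sup_rspan (hC : IsTwoSidedRid C) {e : R} (he : e * e - e ∈ C)
    (h : 1 - e ∈ C ⊔ rspan e) : 1 - e ∈ C := by
  obtain ⟨c, hc, y, hy, hcy⟩ := Submodule.mem_sup.1 h
  obtain ⟨s, rfl⟩ := Submodule.mem_span_singleton.1 hy
  rw [MulOpposite.smul_eq_mul_unop] at hcy
  rw [eq_sub_of_add_eq hcy] at hc
  have key : 1 - e = (1 - e) * (1 - e - e * unop s) - (e * e - e) - (e * e - e) * unop s := by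
    noncomm_ring
  rw [key]
  exact sub_mem (sub_mem (hC _ _ hc) he) (C.smul_mem _ he)

theorem mem_or_one_sub_mem_of_mul_self_sub_mem (hC : IsTwoSidedRid C)
    (hU : IsUniserialMod Rᵐᵒᵖ (R ⧸ C)) {e : R} (he : e * e - e ∈ C) :
    e ∈ C ∨ 1 - e ∈ C := by
  have he' : (1 - e) * (1 - e) - (1 - e) ∈ C := by
    have : (1 - e) * (1 - e) - (1 - e) = e * e - e := by noncomm_ring
    rwa [this]
  have hmem : ∀ x : R, x ∈ C ⊔ rspan x := fun x =>
    Submodule.mem_sup_right (Submodule.mem_span_singleton_self x)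
  rcases hU.sup_le_total (rspan e) (rspan (1 - e)) with h | h
  · left
    simpa using one_sub_mem_of_mem_sup_rspan hC he' (by simpa using h (hmem e))
  · exact Or.inr (one_sub_mem_of_mem_sup_rspan hC he (h (hmem _)))

theorem one_sub_mul_mem_of_one_sub_mul_mem (hCtop : C ≠ ⊤) (hC : IsTwoSidedRid C)
    (hU : IsUniserialMod Rᵐᵒᵖ (R ⧸ C)) {t r : R} (h : 1 - t * r ∈ C) : 1 - r * t ∈ C := by
  refine (mem_or_one_sub_mem_of_mul_self_sub_mem hC hU
    (mul_self_sub_mem_of_one_sub_mul_mem hC h)).resolve_left fun hrt => hCtop ?_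
  have hone : (1 : R) = (1 - t * r) + (1 - t * r) * (t * r) + t * (r * t) * r := by noncomm_ring
  have h1 : (1 : R) ∈ C := by
    rw [hone]
    exact add_mem (add_mem h (C.smul_mem _ h)) (C.smul_mem _ (hC t _ hrt))
  exact Submodule.eq_top_iff'.2 fun x => by simpa using C.smul_mem (op x) h1

end Uniserial

section Similarity

theorem eq_top_iff_of_quotient_equiv {S M : Type*} [Ring S] [AddCommGroup M] [Module S M]
    {A B : Submodule S M} (φ : (M ⧸ A) ≃ₗ[S] (M ⧸ B)) : A = ⊤ ↔ B = ⊤ := by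
  rw [← Submodule.Quotient.subsingleton_iff, ← Submodule.Quotient.subsingleton_iff]
  exact φ.toEquiv.subsingleton_congr

variable {R : Type u} [Ring R]

-- `t` represents the image of `1 + B` and `r` a preimage of `1 + A`.
theorem exists_mul_of_quotient_equiv {A B : Submodule Rᵐᵒᵖ R} (φ : (R ⧸ B) ≃ₗ[Rᵐᵒᵖ] (R ⧸ A)) :
    ∃ t r : R, 1 - t * r ∈ A ∧ ∀ s, s ∈ B ↔ t * s ∈ A := by
  obtain ⟨t, ht⟩ := Submodule.Quotient.mk_surjective A (φ (Submodule.Quotient.mk 1))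
  have hφ : ∀ s : R, φ (Submodule.Quotient.mk s) = Submodule.Quotient.mk (t * s) := by
    intro s
    have hs : (Submodule.Quotient.mk s : R ⧸ B) = op s • Submodule.Quotient.mk 1 := by
      rw [← Submodule.Quotient.mk_smul, op_smul_eq_mul, one_mul]
    rw [hs, map_smul, ← ht, ← Submodule.Quotient.mk_smul, op_smul_eq_mul]
  obtain ⟨y, hy⟩ := φ.surjective (Submodule.Quotient.mk 1)
  obtain ⟨r, rfl⟩ := Submodule.Quotient.mk_surjective B y
  refine ⟨t, r, ?_, fun s => ?_⟩
  · rw [hφ] at hy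
    simpa using neg_mem ((Submodule.Quotient.eq _).1 hy)
  · rw [← Submodule.Quotient.mk_eq_zero, ← Submodule.Quotient.mk_eq_zero, ← hφ,
      LinearEquiv.map_eq_zero_iff]

theorem eq_of_mem_iff_mul_mem {A B : Submodule Rᵐᵒᵖ R} (hA : IsTwoSidedRid A) {t r : R}
    (hrt : 1 - r * t ∈ A) (hB : ∀ s, s ∈ B ↔ t * s ∈ A) : B = A := by
  ext s
  rw [hB]
  refine ⟨fun hts => ?_, hA t s⟩
  have hs : s = (1 - r * t) * s + r * (t * s) := by noncomm_ring
  rw [hs]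
  exact add_mem (A.smul_mem _ hrt) (hA r _ hts)

end Similarity

section SerialFactorization

variable {R : Type u} [Ring R]

theorem hasSerialFact_top : HasSerialFact (⊤ : Submodule Rᵐᵒᵖ R) :=
  ⟨0, Fin.elim0, fun i => i.elim0, fun i => i.elim0, fun i => i.elim0, fun i => i.elim0, rfl⟩

theorem hasSerialFact_of_isUniserialMod {B : Submodule Rᵐᵒᵖ R} (hB : B ≠ ⊤)
    (hU : IsUniserialMod Rᵐᵒᵖ (R ⧸ B)) : HasSerialFact B := by
  refine ⟨1, fun _ => B, fun _ => hB, fun _ _ => rfl, fun i => ?_, fun _ => hU, rfl⟩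
  simp [Subsingleton.elim _ i]

theorem IsSerialFact.isTwoSidedRid {n : ℕ} (hn : 2 ≤ n) {A : Submodule Rᵐᵒᵖ R}
    {F : Fin n → Submodule Rᵐᵒᵖ R} (hF : IsSerialFact A F) (i : Fin n) :
    IsTwoSidedRid (F i) := by
  have := Fin.nontrivial_iff_two_le.2 hn
  obtain ⟨j, hji⟩ := exists_ne i
  exact isTwoSidedRid_of_sup_eq_top (hF.2.2.1.sup_eq_top hji)
    ((hF.2.1 j i).trans_le rmul_le_left)

theorem IsSerialFact.eq_of_quotient_equiv {n : ℕ} (hn : 2 ≤ n) {A B : Submodule Rᵐᵒᵖ R}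
    {F : Fin n → Submodule Rᵐᵒᵖ R} (hF : IsSerialFact A F) (φ : (R ⧸ B) ≃ₗ[Rᵐᵒᵖ] (R ⧸ A)) :
    B = A := by
  have hts : ∀ X ∈ List.ofFn F, IsTwoSidedRid X := by
    simpa using hF.isTwoSidedRid hn
  obtain ⟨hne, -, -, huni, rfl⟩ := hF
  obtain ⟨t, r, htr, hB⟩ := exists_mul_of_quotient_equiv φ
  have hrt : ∀ X ∈ List.ofFn F, 1 - r * t ∈ X := by
    simp only [List.mem_ofFn, forall_exists_index, forall_apply_eq_imp_iff]
    exact fun i => one_sub_mul_mem_of_one_sub_mul_mem (hne i) (hts _ (by simp)) (huni i)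
      (rprod_le_of_mem hts (by simp) htr)
  have hA := isTwoSidedRid_rprod _ hts
  have hidem : (1 - r * t) * (1 - r * t) - (1 - r * t) ∈ rprod (List.ofFn F) := by
    have e : (1 - r * t) * (1 - r * t) - (1 - r * t) = r * t * (r * t) - r * t := by
      noncomm_ring
    rw [e]
    exact mul_self_sub_mem_of_one_sub_mul_mem hA htr
  have hne' : List.ofFn F ≠ [] := by
    rw [Ne, List.ofFn_eq_nil_iff]
    omega
  exact eq_of_mem_iff_mul_mem hA (mem_rprod_of_mul_self_sub_mem hne' hidem hrt) hB

end SerialFactorization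

theorem statement12_general {R : Type u} [Ring R]
    (A B : Submodule Rᵐᵒᵖ R)
    (hsim : Nonempty ((R ⧸ A) ≃ₗ[Rᵐᵒᵖ] (R ⧸ B)))
    (hA : HasSerialFact A) :
    HasSerialFact B ∧ (A = B ∨ IsUniserialMod Rᵐᵒᵖ (R ⧸ A)) := by
  obtain ⟨φ⟩ := hsim
  obtain ⟨n, F, hF⟩ := hA
  rcases lt_or_ge n 2 with hn | hn
  · interval_cases n
    · have hAtop : A = ⊤ := hF.2.2.2.2
      obtain rfl := (eq_top_iff_of_quotient_equiv φ).1 hAtop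
      exact ⟨hasSerialFact_top, Or.inl hAtop⟩
    · have hAF : A = F 0 := hF.2.2.2.2
      have hU : IsUniserialMod Rᵐᵒᵖ (R ⧸ A) := hAF ▸ hF.2.2.2.1 0
      have hB : B ≠ ⊤ := by
        rw [Ne, ← eq_top_iff_of_quotient_equiv φ, hAF]
        exact hF.1 0
      exact ⟨hasSerialFact_of_isUniserialMod hB (hU.of_equiv φ), Or.inr hU⟩
  · obtain rfl := hF.eq_of_quotient_equiv hn φ.symm
    exact ⟨⟨n, F, hF⟩, Or.inl rfl⟩

/-- Theorem 3.3: if `A` and `B` are similar right ideals (`R/A ≅ R/B`) and `A` has a serial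
factorization, then `B` has a serial factorization, and either `A = B` or `R/A` is
uniserial. -/
theorem statement12 {R : Type u} [Ring R] [Nontrivial R]
    (A B : Submodule Rᵐᵒᵖ R)
    (hsim : Nonempty ((R ⧸ A) ≃ₗ[Rᵐᵒᵖ] (R ⧸ B)))
    (hA : HasSerialFact A) :
    HasSerialFact B ∧ (A = B ∨ IsUniserialMod Rᵐᵒᵖ (R ⧸ A)) :=
  statement12_general A B hsim hA
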